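/- arXiv:cond-mat/0408393 — 5 statements merged into one kernel-verified Lean document; each statement's English description precedes it below -/
import Mathlib

section
/- For t₁, t₂, t₃ ∈ (0,1) with αμ and Aμ defined as for the triangular lattice (α₀ = 1 + t₁t₂t₃, α₁ = t₁ + t₂t₃, α₂ = t₂ + t₃t₁, α₃ = t₃ + t₁t₂, A₀ = Σ αμ², A₁ = 2(α₀α₁ − α₂α₃), A₂ = 2(α₀α₂ − α₃α₁), A₃ = 2(α₀α₃ − α₁α₂)), the condition A₀ − A₁ − A₂ − A₃ = 0 holds if and only if α₀ − α₁ − α₂ − α₃ = 0. -/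
theorem sq_add_sq_add_sq_add_sq_sub_cross_terms {R : Type*} [CommRing R] (a₀ a₁ a₂ a₃ : R) :
    a₀ ^ 2 + a₁ ^ 2 + a₂ ^ 2 + a₃ ^ 2 - 2 * (a₀ * a₁ - a₂ * a₃) - 2 * (a₀ * a₂ - a₃ * a₁)
      - 2 * (a₀ * a₃ - a₁ * a₂) = (a₀ - a₁ - a₂ - a₃) ^ 2 := by
  ring

theorem stmt_2_general (t₁ t₂ t₃ : ℝ) :
    let α₀ := 1 + t₁ * t₂ * t₃
    let α₁ := t₁ + t₂ * t₃
    let α₂ := t₂ + t₃ * t₁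
    let α₃ := t₃ + t₁ * t₂
    let A₀ := α₀^2 + α₁^2 + α₂^2 + α₃^2
    let A₁ := 2 * (α₀ * α₁ - α₂ * α₃)
    let A₂ := 2 * (α₀ * α₂ - α₃ * α₁)
    let A₃ := 2 * (α₀ * α₃ - α₁ * α₂)
    (A₀ - A₁ - A₂ - A₃ = 0 ↔ α₀ - α₁ - α₂ - α₃ = 0) := by
  intro α₀ α₁ α₂ α₃ A₀ A₁ A₂ A₃
  rw [sq_add_sq_add_sq_add_sq_sub_cross_terms, sq_eq_zero_iff]

theorem stmt_2 (t₁ t₂ t₃ : ℝ)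
    (h₁ : t₁ ∈ Set.Ioo (0:ℝ) 1) (h₂ : t₂ ∈ Set.Ioo (0:ℝ) 1) (h₃ : t₃ ∈ Set.Ioo (0:ℝ) 1) :
    let α₀ := 1 + t₁ * t₂ * t₃
    let α₁ := t₁ + t₂ * t₃
    let α₂ := t₂ + t₃ * t₁
    let α₃ := t₃ + t₁ * t₂
    let A₀ := α₀^2 + α₁^2 + α₂^2 + α₃^2
    let A₁ := 2 * (α₀ * α₁ - α₂ * α₃)
    let A₂ := 2 * (α₀ * α₂ - α₃ * α₁)
    let A₃ := 2 * (α₀ * α₃ - α₁ * α₂)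
    (A₀ - A₁ - A₂ - A₃ = 0 ↔ α₀ - α₁ - α₂ - α₃ = 0) :=
  stmt_2_general t₁ t₂ t₃
end

section
/- For t₁, t₂, t₃ ∈ (0,1) with the triangular-lattice Aμ as above, one has (A₂A₃ + A₀A₁)/A₁² ≥ 1, i.e. A₂A₃ + A₀A₁ ≥ A₁². -/
/-!
The difference `A₂A₃ + A₀A₁ - A₁²` factors as `(1 - t₂²)(1 - t₃²)` times
`4t₂t₃(1 + t₁²)² + 2t₁(1 + t₁²)(1 + t₂²)(1 + t₃²) - 4t₁²(1 - t₂²)(1 - t₃²)`.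
The first factor is nonnegative for `t₂, t₃ ∈ (0,1)`, and so is the second, because
`2t₁(1 + t₁²) ≥ 4t₁²` (AM-GM) and `(1 + t₂²)(1 + t₃²) ≥ (1 - t₂²)(1 - t₃²)`.
-/

lemma one_sub_sq_mul_one_sub_sq_le (t₂ t₃ : ℝ) :
    (1 - t₂ ^ 2) * (1 - t₃ ^ 2) ≤ (1 + t₂ ^ 2) * (1 + t₃ ^ 2) := by
  have hdiff : (1 + t₂ ^ 2) * (1 + t₃ ^ 2) - (1 - t₂ ^ 2) * (1 - t₃ ^ 2)
      = 2 * (t₂ ^ 2 + t₃ ^ 2) := by ring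
  nlinarith [sq_nonneg t₂, sq_nonneg t₃]

lemma four_mul_sq_mul_le_of_le {t u v : ℝ} (ht : 0 ≤ t) (hu : 0 ≤ u) (hvu : v ≤ u) :
    4 * t ^ 2 * v ≤ 2 * t * (1 + t ^ 2) * u := by
  have hgap : 2 * t * (1 + t ^ 2) * u - 4 * t ^ 2 * u = 2 * t * u * (1 - t) ^ 2 := by ring
  calc 4 * t ^ 2 * v ≤ 4 * t ^ 2 * u := by gcongr
    _ ≤ 2 * t * (1 + t ^ 2) * u := by
      have : 0 ≤ 2 * t * u * (1 - t) ^ 2 := by positivity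
      linarith

lemma bracket_nonneg {t₁ t₂ t₃ : ℝ} (ht₁ : 0 ≤ t₁) (ht₂₃ : 0 ≤ t₂ * t₃) :
    0 ≤ 4 * t₂ * t₃ * (1 + t₁ ^ 2) ^ 2 + 2 * t₁ * (1 + t₁ ^ 2) * ((1 + t₂ ^ 2) * (1 + t₃ ^ 2))
      - 4 * t₁ ^ 2 * ((1 - t₂ ^ 2) * (1 - t₃ ^ 2)) := by
  have h := four_mul_sq_mul_le_of_le ht₁ (by positivity) (one_sub_sq_mul_one_sub_sq_le t₂ t₃)
  have : 0 ≤ 4 * (t₂ * t₃) * (1 + t₁ ^ 2) ^ 2 := by positivity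
  linarith

theorem stmt_3 (t₁ t₂ t₃ : ℝ)
    (h₁ : t₁ ∈ Set.Ioo (0:ℝ) 1) (h₂ : t₂ ∈ Set.Ioo (0:ℝ) 1) (h₃ : t₃ ∈ Set.Ioo (0:ℝ) 1) :
    let α₀ := 1 + t₁ * t₂ * t₃
    let α₁ := t₁ + t₂ * t₃
    let α₂ := t₂ + t₃ * t₁
    let α₃ := t₃ + t₁ * t₂
    let A₀ := α₀^2 + α₁^2 + α₂^2 + α₃^2
    let A₁ := 2 * (α₀ * α₁ - α₂ * α₃)
    let A₂ := 2 * (α₀ * α₂ - α₃ * α₁)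
    let A₃ := 2 * (α₀ * α₃ - α₁ * α₂)
    A₂ * A₃ + A₀ * A₁ ≥ A₁^2 := by
  intro α₀ α₁ α₂ α₃ A₀ A₁ A₂ A₃
  have factorization : A₂ * A₃ + A₀ * A₁ - A₁ ^ 2 = (1 - t₂ ^ 2) * (1 - t₃ ^ 2) *
      (4 * t₂ * t₃ * (1 + t₁ ^ 2) ^ 2 + 2 * t₁ * (1 + t₁ ^ 2) * ((1 + t₂ ^ 2) * (1 + t₃ ^ 2))
        - 4 * t₁ ^ 2 * ((1 - t₂ ^ 2) * (1 - t₃ ^ 2))) := by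
    simp only [A₀, A₁, A₂, A₃, α₀, α₁, α₂, α₃]
    ring
  have h₂₃ : 0 ≤ (1 - t₂ ^ 2) * (1 - t₃ ^ 2) := by
    obtain ⟨h₂0, h₂1⟩ := h₂
    obtain ⟨h₃0, h₃1⟩ := h₃
    exact mul_nonneg (by nlinarith) (by nlinarith)
  have hbracket := bracket_nonneg h₁.1.le (mul_pos h₂.1 h₃.1).le
  rw [ge_iff_le, ← sub_nonneg, factorization]
  exact mul_nonneg h₂₃ hbracket
end

section
/- For t₁, t₂, t₃ ∈ (0,1) with the triangular-lattice Aμ defined as above, and for any x ∈ [−1,1], the quantity (A₀ − A₁x)² − (A₂² + A₃² + 2A₂A₃x) is nonnegative; equivalently, G(x) = √(A₂² + A₃² + 2A₂A₃x)/(A₀ − A₁x) satisfies G(x) ≤ 1. -/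
/-!
With `a = (1 + x)/2`, `b = (1 - x)/2`, `u = α₀ - α₁`, `v = α₂ + α₃`, `p = α₀ + α₁`, `q = α₂ - α₃`,
one has `A₀ - A₁x = a(u² + v²) + b(p² + q²)` and `A₂² + A₃² + 2A₂A₃x = a(2uv)² + b(2pq)²`,
and the difference of the squared first and the second is `a X² + b Y² - ab (P - Q)²`
with `X = u² - v²`, `Y = p² - q²`, `P = u² + v²`, `Q = p² + q²`. It is nonnegative as soon as
`|P - Q| ≤ Y`, that is `2q² ≤ u² + v² ≤ 2p²`. For the triangular weights both gaps are
`(1 ∓ t₁)²((1 - t₂²)(1 - t₃²) + 4t₂t₃)` up to a nonnegative term.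
-/

open Set

theorem sq_two_mul_convex_le {a b u v p q : ℝ} (ha : 0 ≤ a) (hb : 0 ≤ b) (hab : a + b = 1)
    (hlow : 2 * q ^ 2 ≤ u ^ 2 + v ^ 2) (hup : u ^ 2 + v ^ 2 ≤ 2 * p ^ 2) :
    a * (2 * u * v) ^ 2 + b * (2 * p * q) ^ 2 ≤ (a * (u ^ 2 + v ^ 2) + b * (p ^ 2 + q ^ 2)) ^ 2 := by
  obtain rfl : b = 1 - a := by linarith
  have hgap : (a * (u ^ 2 + v ^ 2) + (1 - a) * (p ^ 2 + q ^ 2)) ^ 2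
      - (a * (2 * u * v) ^ 2 + (1 - a) * (2 * p * q) ^ 2)
      = a * (u ^ 2 - v ^ 2) ^ 2 + (1 - a) * ((p ^ 2 - q ^ 2) ^ 2
          - a * (u ^ 2 + v ^ 2 - (p ^ 2 + q ^ 2)) ^ 2) := by ring
  have hmid : (u ^ 2 + v ^ 2 - (p ^ 2 + q ^ 2)) ^ 2 ≤ (p ^ 2 - q ^ 2) ^ 2 :=
    sq_le_sq' (by linarith) (by linarith)
  have hshrink : a * (u ^ 2 + v ^ 2 - (p ^ 2 + q ^ 2)) ^ 2 ≤ (p ^ 2 - q ^ 2) ^ 2 :=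
    (mul_le_of_le_one_left (sq_nonneg _) (by linarith)).trans hmid
  linarith [mul_nonneg ha (sq_nonneg (u ^ 2 - v ^ 2)), mul_nonneg hb (sub_nonneg.2 hshrink)]

namespace IsingCylinder

/-- `A₀ - A₁ x` in terms of the weights `α_μ`. -/
def denom (α₀ α₁ α₂ α₃ x : ℝ) : ℝ :=
  α₀ ^ 2 + α₁ ^ 2 + α₂ ^ 2 + α₃ ^ 2 - 2 * (α₀ * α₁ - α₂ * α₃) * x

/-- `A₂² + A₃² + 2 A₂ A₃ x` in terms of the weights `α_μ`. -/
def radicand (α₀ α₁ α₂ α₃ x : ℝ) : ℝ :=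
  (2 * (α₀ * α₂ - α₃ * α₁)) ^ 2 + (2 * (α₀ * α₃ - α₁ * α₂)) ^ 2
    + 2 * (2 * (α₀ * α₂ - α₃ * α₁)) * (2 * (α₀ * α₃ - α₁ * α₂)) * x

variable {α₀ α₁ α₂ α₃ x : ℝ}

theorem denom_eq : denom α₀ α₁ α₂ α₃ x
    = (1 + x) / 2 * ((α₀ - α₁) ^ 2 + (α₂ + α₃) ^ 2)
      + (1 - x) / 2 * ((α₀ + α₁) ^ 2 + (α₂ - α₃) ^ 2) := by
  unfold denom; ring

theorem radicand_eq : radicand α₀ α₁ α₂ α₃ x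
    = (1 + x) / 2 * (2 * (α₀ - α₁) * (α₂ + α₃)) ^ 2
      + (1 - x) / 2 * (2 * (α₀ + α₁) * (α₂ - α₃)) ^ 2 := by
  unfold radicand; ring

theorem denom_nonneg (hx : x ∈ Icc (-1) 1) : 0 ≤ denom α₀ α₁ α₂ α₃ x := by
  rw [denom_eq]
  exact add_nonneg (mul_nonneg (by linarith [hx.1]) (by positivity))
    (mul_nonneg (by linarith [hx.2]) (by positivity))

theorem radicand_le_denom_sq (hx : x ∈ Icc (-1) 1)
    (hlow : 2 * (α₂ - α₃) ^ 2 ≤ (α₀ - α₁) ^ 2 + (α₂ + α₃) ^ 2)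
    (hup : (α₀ - α₁) ^ 2 + (α₂ + α₃) ^ 2 ≤ 2 * (α₀ + α₁) ^ 2) :
    radicand α₀ α₁ α₂ α₃ x ≤ denom α₀ α₁ α₂ α₃ x ^ 2 := by
  rw [denom_eq, radicand_eq]
  exact sq_two_mul_convex_le (by linarith [hx.1]) (by linarith [hx.2]) (by ring) hlow hup

theorem sqrt_radicand_div_denom_le_one (hx : x ∈ Icc (-1) 1)
    (hle : radicand α₀ α₁ α₂ α₃ x ≤ denom α₀ α₁ α₂ α₃ x ^ 2) :
    Real.sqrt (radicand α₀ α₁ α₂ α₃ x) / denom α₀ α₁ α₂ α₃ x ≤ 1 :=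
  div_le_one_of_le₀ ((Real.sqrt_le_left (denom_nonneg hx)).2 hle) (denom_nonneg hx)

end IsingCylinder

section Triangular

variable {t₁ t₂ t₃ : ℝ}

theorem triangular_cross_nonneg (h₂ : t₂ ∈ Icc (0 : ℝ) 1) (h₃ : t₃ ∈ Icc (0 : ℝ) 1) :
    0 ≤ (1 - t₂ ^ 2) * (1 - t₃ ^ 2) + 4 * t₂ * t₃ := by
  have h₂' : 0 ≤ 1 - t₂ ^ 2 := by nlinarith [h₂.1, h₂.2]
  have h₃' : 0 ≤ 1 - t₃ ^ 2 := by nlinarith [h₃.1, h₃.2]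
  exact add_nonneg (mul_nonneg h₂' h₃') (mul_nonneg (mul_nonneg zero_le_four h₂.1) h₃.1)

theorem triangular_lower (h₁ : 0 ≤ t₁) (h₂ : t₂ ∈ Icc (0 : ℝ) 1) (h₃ : t₃ ∈ Icc (0 : ℝ) 1) :
    2 * ((1 - t₁) * (t₂ - t₃)) ^ 2 ≤ ((1 - t₁) * (1 - t₂ * t₃)) ^ 2 + ((1 + t₁) * (t₂ + t₃)) ^ 2 := by
  have hs := mul_nonneg (sq_nonneg (1 - t₁)) (triangular_cross_nonneg h₂ h₃)
  have hmono : (1 - t₁) ^ 2 * (t₂ + t₃) ^ 2 ≤ (1 + t₁) ^ 2 * (t₂ + t₃) ^ 2 :=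
    mul_le_mul_of_nonneg_right (by linarith) (sq_nonneg _)
  linarith

theorem triangular_upper (h₁ : 0 ≤ t₁) (h₂ : t₂ ∈ Icc (0 : ℝ) 1) (h₃ : t₃ ∈ Icc (0 : ℝ) 1) :
    ((1 - t₁) * (1 - t₂ * t₃)) ^ 2 + ((1 + t₁) * (t₂ + t₃)) ^ 2 ≤ 2 * ((1 + t₁) * (1 + t₂ * t₃)) ^ 2 := by
  have hs := mul_nonneg (sq_nonneg (1 + t₁)) (triangular_cross_nonneg h₂ h₃)
  have hmono : (1 - t₁) ^ 2 * (1 - t₂ * t₃) ^ 2 ≤ (1 + t₁) ^ 2 * (1 - t₂ * t₃) ^ 2 :=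
    mul_le_mul_of_nonneg_right (by linarith) (sq_nonneg _)
  linarith

end Triangular

theorem stmt_6 (t₁ t₂ t₃ : ℝ)
    (h₁ : t₁ ∈ Set.Ioo (0:ℝ) 1) (h₂ : t₂ ∈ Set.Ioo (0:ℝ) 1) (h₃ : t₃ ∈ Set.Ioo (0:ℝ) 1) :
    let α₀ := 1 + t₁ * t₂ * t₃
    let α₁ := t₁ + t₂ * t₃
    let α₂ := t₂ + t₃ * t₁
    let α₃ := t₃ + t₁ * t₂
    let A₀ := α₀^2 + α₁^2 + α₂^2 + α₃^2
    let A₁ := 2 * (α₀ * α₁ - α₂ * α₃)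
    let A₂ := 2 * (α₀ * α₂ - α₃ * α₁)
    let A₃ := 2 * (α₀ * α₃ - α₁ * α₂)
    ∀ x ∈ Set.Icc (-1:ℝ) 1,
      0 ≤ (A₀ - A₁ * x)^2 - (A₂^2 + A₃^2 + 2 * A₂ * A₃ * x) ∧
      Real.sqrt (A₂^2 + A₃^2 + 2 * A₂ * A₃ * x) / (A₀ - A₁ * x) ≤ 1 := by
  intro α₀ α₁ α₂ α₃ A₀ A₁ A₂ A₃ x hx
  have hu : α₀ - α₁ = (1 - t₁) * (1 - t₂ * t₃) := by simp only [α₀, α₁]; ring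
  have hv : α₂ + α₃ = (1 + t₁) * (t₂ + t₃) := by simp only [α₂, α₃]; ring
  have hp : α₀ + α₁ = (1 + t₁) * (1 + t₂ * t₃) := by simp only [α₀, α₁]; ring
  have hq : α₂ - α₃ = (1 - t₁) * (t₂ - t₃) := by simp only [α₂, α₃]; ring
  have hlow : 2 * (α₂ - α₃) ^ 2 ≤ (α₀ - α₁) ^ 2 + (α₂ + α₃) ^ 2 := by
    rw [hu, hv, hq]; exact triangular_lower h₁.1.le (Ioo_subset_Icc_self h₂) (Ioo_subset_Icc_self h₃)
  have hup : (α₀ - α₁) ^ 2 + (α₂ + α₃) ^ 2 ≤ 2 * (α₀ + α₁) ^ 2 := by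
    rw [hu, hv, hp]; exact triangular_upper h₁.1.le (Ioo_subset_Icc_self h₂) (Ioo_subset_Icc_self h₃)
  have hle := IsingCylinder.radicand_le_denom_sq hx hlow hup
  exact ⟨sub_nonneg.2 hle, IsingCylinder.sqrt_radicand_div_denom_le_one hx hle⟩
end

section
/- For t₁, t₂, t₃ ∈ (0,1) with the triangular-lattice Aμ as above, if x ∈ [−1,1) (i.e. x ≠ 1), then (A₀ − A₁x)² − (A₂² + A₃² + 2A₂A₃x) > 0 strictly. -/
/-
Each coupling factors as `A₁ = 2 t₁ (1 - t₂²)(1 - t₃²)` (and cyclically), so all three are positive,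
while `A₀ - A₁ - A₂ - A₃ = (α₀ - α₁ - α₂ - α₃)² ≥ 0`. Hence for `x < 1`,
`A₀ - A₁ x ≥ A₂ + A₃ > 0` and `(A₀ - A₁ x)² ≥ (A₂ + A₃)² > A₂² + A₃² + 2 A₂ A₃ x`.
-/

open Set

lemma coupling_eq (a b c : ℝ) :
    (1 + a * b * c) * (a + b * c) - (b + c * a) * (c + a * b) = a * (1 - b ^ 2) * (1 - c ^ 2) := by
  ring

lemma coupling_pos {a b c : ℝ} (ha : a ∈ Ioo (0 : ℝ) 1) (hb : b ∈ Ioo (0 : ℝ) 1)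
    (hc : c ∈ Ioo (0 : ℝ) 1) :
    0 < 2 * ((1 + a * b * c) * (a + b * c) - (b + c * a) * (c + a * b)) := by
  have hb' : 0 < 1 - b ^ 2 := sub_pos.2 (pow_lt_one₀ hb.1.le hb.2 two_ne_zero)
  have hc' : 0 < 1 - c ^ 2 := sub_pos.2 (pow_lt_one₀ hc.1.le hc.2 two_ne_zero)
  rw [coupling_eq]
  exact mul_pos two_pos (mul_pos (mul_pos ha.1 hb') hc')

lemma couplings_le_sum_sq (α₀ α₁ α₂ α₃ : ℝ) :
    2 * (α₀ * α₁ - α₂ * α₃) + 2 * (α₀ * α₂ - α₃ * α₁) + 2 * (α₀ * α₃ - α₁ * α₂) ≤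
      α₀ ^ 2 + α₁ ^ 2 + α₂ ^ 2 + α₃ ^ 2 := by
  nlinarith [sq_nonneg (α₀ - α₁ - α₂ - α₃)]

lemma sq_add_sq_add_mul_lt_sq {A₀ A₁ A₂ A₃ x : ℝ} (h₁ : 0 ≤ A₁) (h₂ : 0 < A₂) (h₃ : 0 < A₃)
    (hsum : A₁ + A₂ + A₃ ≤ A₀) (hx : x < 1) :
    A₂ ^ 2 + A₃ ^ 2 + 2 * A₂ * A₃ * x < (A₀ - A₁ * x) ^ 2 := by
  have hlin : A₂ + A₃ ≤ A₀ - A₁ * x := by nlinarith [mul_nonneg h₁ (sub_nonneg.2 hx.le)]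
  have hcross : 0 < A₂ * A₃ * (1 - x) := mul_pos (mul_pos h₂ h₃) (sub_pos.2 hx)
  calc A₂ ^ 2 + A₃ ^ 2 + 2 * A₂ * A₃ * x < (A₂ + A₃) ^ 2 := by linear_combination 2 * hcross
    _ ≤ (A₀ - A₁ * x) ^ 2 := pow_le_pow_left₀ (by positivity) hlin 2

theorem stmt_7 (t₁ t₂ t₃ : ℝ)
    (h₁ : t₁ ∈ Set.Ioo (0:ℝ) 1) (h₂ : t₂ ∈ Set.Ioo (0:ℝ) 1) (h₃ : t₃ ∈ Set.Ioo (0:ℝ) 1) :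
    let α₀ := 1 + t₁ * t₂ * t₃
    let α₁ := t₁ + t₂ * t₃
    let α₂ := t₂ + t₃ * t₁
    let α₃ := t₃ + t₁ * t₂
    let A₀ := α₀^2 + α₁^2 + α₂^2 + α₃^2
    let A₁ := 2 * (α₀ * α₁ - α₂ * α₃)
    let A₂ := 2 * (α₀ * α₂ - α₃ * α₁)
    let A₃ := 2 * (α₀ * α₃ - α₁ * α₂)
    ∀ x ∈ Set.Ico (-1:ℝ) 1,
      0 < (A₀ - A₁ * x)^2 - (A₂^2 + A₃^2 + 2 * A₂ * A₃ * x) := by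
  intro α₀ α₁ α₂ α₃ A₀ A₁ A₂ A₃ x hx
  have hA₁ : 0 < A₁ := coupling_pos h₁ h₂ h₃
  have hA₂ : 0 < A₂ := (coupling_pos h₂ h₃ h₁).trans_eq (by simp only [A₂, α₀, α₁, α₂, α₃]; ring)
  have hA₃ : 0 < A₃ := (coupling_pos h₃ h₁ h₂).trans_eq (by simp only [A₃, α₀, α₁, α₂, α₃]; ring)
  exact sub_pos.2 (sq_add_sq_add_mul_lt_sq hA₁.le hA₂ hA₃ (couplings_le_sum_sq α₀ α₁ α₂ α₃) hx.2)
end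

section
/- For t₁, t₂, t₃ ∈ (0,1) with the triangular-lattice αμ and Aμ as above, the equality (A₀ − A₁)² = (A₂ + A₃)² holds if and only if α₀ − α₁ − α₂ − α₃ = 0, i.e. 1 + t₁t₂t₃ − (t₁ + t₂t₃) − (t₂ + t₃t₁) − (t₃ + t₁t₂) = 0. -/
theorem stmt_8 (t₁ t₂ t₃ : ℝ)
    (h₁ : t₁ ∈ Set.Ioo (0:ℝ) 1) (h₂ : t₂ ∈ Set.Ioo (0:ℝ) 1) (h₃ : t₃ ∈ Set.Ioo (0:ℝ) 1) :
    let α₀ := 1 + t₁ * t₂ * t₃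
    let α₁ := t₁ + t₂ * t₃
    let α₂ := t₂ + t₃ * t₁
    let α₃ := t₃ + t₁ * t₂
    let A₀ := α₀^2 + α₁^2 + α₂^2 + α₃^2
    let A₁ := 2 * (α₀ * α₁ - α₂ * α₃)
    let A₂ := 2 * (α₀ * α₂ - α₃ * α₁)
    let A₃ := 2 * (α₀ * α₃ - α₁ * α₂)
    ((A₀ - A₁)^2 = (A₂ + A₃)^2 ↔
      1 + t₁ * t₂ * t₃ - (t₁ + t₂ * t₃) - (t₂ + t₃ * t₁) - (t₃ + t₁ * t₂) = 0) := by
  obtain ⟨a1, b1⟩ := h₁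
  obtain ⟨a2, b2⟩ := h₂
  obtain ⟨a3, b3⟩ := h₃
  intro α₀ α₁ α₂ α₃ A₀ A₁ A₂ A₃
  have hpos : α₀ - α₁ + α₂ + α₃ > 0 := by
    simp only [α₀, α₁, α₂, α₃]
    nlinarith [mul_pos a2 a3, mul_pos a1 a2, mul_pos a1 a3,
      mul_pos (mul_pos a1 a2) a3]
  have key : (A₀ - A₁)^2 - (A₂ + A₃)^2
      = ((α₀ - α₁ - α₂ - α₃) * (α₀ - α₁ + α₂ + α₃))^2 := by
    simp only [A₀, A₁, A₂, A₃]; ring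
  constructor
  · intro h
    have h0 : ((α₀ - α₁ - α₂ - α₃) * (α₀ - α₁ + α₂ + α₃))^2 = 0 := by
      rw [← key]; linarith
    have := pow_eq_zero_iff (n := 2) (by norm_num) |>.mp h0
    have h1 : α₀ - α₁ - α₂ - α₃ = 0 := by
      rcases mul_eq_zero.mp this with h' | h'
      · exact h'
      · linarith
    simp only [α₀, α₁, α₂, α₃] at h1
    linarith
  · intro h
    have h1 : α₀ - α₁ - α₂ - α₃ = 0 := by
      simp only [α₀, α₁, α₂, α₃]; linarith
    rw [h1, zero_mul] at key
    simp only [ne_eq, OfNat.ofNat_ne_zero, not_false_eq_true, zero_pow] at key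
    linarith
end
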